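/- Let r ≤ s, C ∈ Herm_r^{++}, D ∈ Herm_s^{++}. Set Λ = diag(min{1,λ_1(D_{11}^{-1}C)},…,min{1,λ_r(D_{11}^{-1}C)},1,…,1) ∈ Herm_s^{++}. Then there is a unique C_+ ∈ Ω_+(C) = {Y ∈ Herm_s^{++} : Y_{11} ⪯ C} such that for some invertible Z with Z D Z* = I_s and Z Ω_+(C) Z* = Ω_+(Σ) one has Z C_+ Z* = Λ; explicitly, C_+ = L* Λ L where L = [[P D_{11}^{1/2}, P D_{11}^{-1/2} D_{12}],[0, (D_{22}−D_{12}* D_{11}^{-1} D_{12})^{1/2}]] and P ∈ U(r) diagonalizes D_{11}^{-1/2} C D_{11}^{-1/2}. In particular C_+ is independent of the choices of P and Z. -/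

import Mathlib

noncomputable section

open Matrix Finset
open scoped ComplexOrder

abbrev Mat (p : ℕ) := Matrix (Fin p) (Fin p) ℂ
abbrev Euc (n : ℕ) := EuclideanSpace ℂ (Fin n)

/-- Loewner order: `X ⪯ Y`. -/
def loewner {p : ℕ} (X Y : Mat p) : Prop := (Y - X).PosSemidef

namespace Matrix

/-- The square root of a positive semidefinite matrix, as defined in the older Mathlib
(`Matrix.PosSemidef.sqrt`, since removed). -/
def PosSemidef.sqrt {n 𝕜 : Type*} [Fintype n] [DecidableEq n] [RCLike 𝕜] {A : Matrix n n 𝕜}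
    (hA : A.PosSemidef) : Matrix n n 𝕜 :=
  (hA.1.eigenvectorUnitary : Matrix n n 𝕜) *
    diagonal ((RCLike.ofReal : ℝ → 𝕜) ∘ Real.sqrt ∘ hA.1.eigenvalues) *
    (star hA.1.eigenvectorUnitary : Matrix n n 𝕜)

theorem PosSemidef.posSemidef_sqrt {n 𝕜 : Type*} [Fintype n] [DecidableEq n] [RCLike 𝕜]
    {A : Matrix n n 𝕜} (hA : A.PosSemidef) : hA.sqrt.PosSemidef := by
  unfold PosSemidef.sqrt
  have hd : (diagonal ((RCLike.ofReal : ℝ → 𝕜) ∘ Real.sqrt ∘ hA.1.eigenvalues)).PosSemidef := by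
    refine posSemidef_diagonal_iff.mpr fun i => ?_
    simp only [Function.comp_apply]
    exact RCLike.ofReal_nonneg.mpr (Real.sqrt_nonneg _)
  have := hd.mul_mul_conjTranspose_same (hA.1.eigenvectorUnitary : Matrix n n 𝕜)
  simpa [Matrix.star_eq_conjTranspose] using this

end Matrix

/-- Eigenvalues (unsorted) of `X^{-1/2} Y X^{-1/2}`, i.e. of the pencil `X⁻¹ Y`. -/
def relEigs {p : ℕ} {X Y : Mat p} (hX : X.PosDef) (hY : Y.IsHermitian) : Fin p → ℝ :=
  Matrix.IsHermitian.eigenvalues (A := hX.posSemidef.sqrt⁻¹ * Y * hX.posSemidef.sqrt⁻¹) (by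
    have hS : (hX.posSemidef.sqrt).IsHermitian := hX.posSemidef.posSemidef_sqrt.isHermitian
    have hSi : (hX.posSemidef.sqrt⁻¹).IsHermitian := hS.inv
    have h : hX.posSemidef.sqrt⁻¹ * Y * hX.posSemidef.sqrt⁻¹
        = hX.posSemidef.sqrt⁻¹ * Y * (hX.posSemidef.sqrt⁻¹)ᴴ := by rw [hSi.eq]
    rw [h]
    exact Matrix.isHermitian_mul_mul_conjTranspose _ hY)

/-- Eigenvalues of a Hermitian matrix, sorted in decreasing order. -/
def eigsDesc {p : ℕ} {Z : Mat p} (hZ : Z.IsHermitian) : Fin p → ℝ :=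
  fun i => (hZ.eigenvalues ∘ Tuple.sort hZ.eigenvalues) i.rev

/-- Decreasingly sorted eigenvalues of the pencil `X⁻¹ Y`. -/
def relEigsDesc {p : ℕ} {X Y : Mat p} (hX : X.PosDef) (hY : Y.IsHermitian) : Fin p → ℝ :=
  fun i => ((relEigs hX hY) ∘ Tuple.sort (relEigs hX hY)) i.rev

/-- Zero-padding of an `a × a` matrix to an `N × N` matrix. -/
def padTo (N : ℕ) {a : ℕ} (A : Mat a) : Mat N :=
  Matrix.of fun i j => if h : (i : ℕ) < a ∧ (j : ℕ) < a then A ⟨i, h.1⟩ ⟨j, h.2⟩ else 0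

/-- `diag(P, I)` where `P` is `c × c`. -/
def upPad {s : ℕ} (c : ℕ) (P : Mat c) : Mat s :=
  Matrix.of fun i j =>
    if hi : (i : ℕ) < c then (if hj : (j : ℕ) < c then P ⟨i, hi⟩ ⟨j, hj⟩ else 0)
    else if (i : ℕ) = (j : ℕ) then 1 else 0

/-- `diag(I_c, T)` where `T` is `(s-c) × (s-c)`. -/
def lowPad {s : ℕ} (c : ℕ) (T : Mat (s - c)) : Mat s :=
  Matrix.of fun i j =>
    if hi : (i : ℕ) < c then (if (i : ℕ) = (j : ℕ) then 1 else 0)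
    else if hj : (j : ℕ) < c then 0
    else T ⟨(i : ℕ) - c, by have := i.isLt; omega⟩ ⟨(j : ℕ) - c, by have := j.isLt; omega⟩

/-- The natural isometric inclusion `k^a → k^N` (for `a ≤ N`), as a linear map. -/
def incl (a N : ℕ) : Euc a →ₗ[ℂ] Euc N :=
  Matrix.toEuclideanLin (Matrix.of fun (i : Fin N) (j : Fin a) => if (i : ℕ) = (j : ℕ) then (1 : ℂ) else 0)

/-- The orthogonal complement of the kernel of (the linear map of) a matrix. -/
def kerPerp {n : ℕ} (A : Mat n) : Submodule ℂ (Euc n) :=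
  (LinearMap.ker (Matrix.toEuclideanLin A))ᗮ

/-- Matrix representation `(uᵢ* A uⱼ)` of `A` with respect to a tuple of vectors `u`. -/
def rep {n p : ℕ} (A : Mat n) (u : Fin p → Euc n) : Mat p :=
  Matrix.of fun i j => (inner ℂ (u i) (Matrix.toEuclideanLin A (u j)) : ℂ)

/-- `(u, v)` is a set of principal vectors between `U` and `V` with cosines of principal
angles `σ` (decreasing). -/
def IsPrincipalSystem {N p q : ℕ} (U V : Submodule ℂ (Euc N))
    (u : Fin p → Euc N) (v : Fin q → Euc N) (σ : Fin (min p q) → ℝ) : Prop :=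
  Orthonormal ℂ u ∧ Submodule.span ℂ (Set.range u) = U ∧
  Orthonormal ℂ v ∧ Submodule.span ℂ (Set.range v) = V ∧
  Antitone σ ∧ (∀ i, 0 ≤ σ i) ∧
  ∀ (i : Fin p) (j : Fin q), (inner ℂ (u i) (v j) : ℂ) =
    if h : (i : ℕ) = (j : ℕ) ∧ (i : ℕ) < min p q then ((σ ⟨(i : ℕ), h.2⟩ : ℝ) : ℂ) else 0

/-- Geodesic distance on Grassmannians: square root of the sum of squared principal angles. -/
def dGr {N : ℕ} (U V : Submodule ℂ (Euc N)) : ℝ :=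
  sInf {x | ∃ (u : Fin (Module.finrank ℂ U) → Euc N) (v : Fin (Module.finrank ℂ V) → Euc N)
    (σ : Fin (min (Module.finrank ℂ U) (Module.finrank ℂ V)) → ℝ),
    IsPrincipalSystem U V u v σ ∧ x = Real.sqrt (∑ i, Real.arccos (σ i) ^ 2)}

/-- Generalized Hausdorff value of a function on a subset of a product. -/
def hausd {α β : Type*} (δ : α → β → ℝ) (Z : Set (α × β)) : ℝ :=
  max (sSup {x | ∃ a ∈ Prod.fst '' Z, x = sInf {y | ∃ b, (a, b) ∈ Z ∧ y = δ a b}})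
      (sSup {x | ∃ b ∈ Prod.snd '' Z, x = sInf {y | ∃ a, (a, b) ∈ Z ∧ y = δ a b}})

/-- The set of pairs of matrix representations with respect to all principal vector systems. -/
def ZSet {N p q : ℕ} (A B : Mat N) : Set (Mat p × Mat q) :=
  {z | ∃ u v σ, IsPrincipalSystem (kerPerp A) (kerPerp B) u v σ ∧ z = (rep A u, rep B v)}

/-- The geometric distance `GD_{d,δ}` between PSD matrices of possibly different sizes. -/
def GD {n m p q : ℕ} (d : ∀ N, Submodule ℂ (Euc N) → Submodule ℂ (Euc N) → ℝ)
    (δ : Mat p → Mat q → ℝ) (A : Mat n) (B : Mat m) : ℝ :=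
  Real.sqrt (d (max n m) (kerPerp (padTo (max n m) A)) (kerPerp (padTo (max n m) B)) ^ 2 +
    hausd δ (ZSet (padTo (max n m) A) (padTo (max n m) B)) ^ 2)

end

open Matrix
open scoped ComplexOrder

noncomputable section

variable {r q : ℕ}

/-- `Λ = diag(min{1,λ₁(D₁₁⁻¹C)},…,min{1,λ_r(D₁₁⁻¹C)},1,…,1)`. -/
def lamMin (σ : Fin r → ℝ) : Matrix (Fin r ⊕ Fin q) (Fin r ⊕ Fin q) ℂ :=
  Matrix.diagonal (Sum.elim (fun k => ((min 1 (σ k) : ℝ) : ℂ)) fun _ => 1)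

/-- The defining property of the lift `C₊`. -/
def IsLift (C : Mat r) (D : Matrix (Fin r ⊕ Fin q) (Fin r ⊕ Fin q) ℂ)
    (σ : Fin r → ℝ) (Cp : Matrix (Fin r ⊕ Fin q) (Fin r ⊕ Fin q) ℂ) : Prop :=
  (Cp.PosDef ∧ loewner (Matrix.toBlocks₁₁ Cp) C) ∧
  ∃ Z : Matrix (Fin r ⊕ Fin q) (Fin r ⊕ Fin q) ℂ, IsUnit Z ∧ Z * D * Zᴴ = 1 ∧
    {W | ∃ Y : Matrix (Fin r ⊕ Fin q) (Fin r ⊕ Fin q) ℂ,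
        (Y.PosDef ∧ loewner (Matrix.toBlocks₁₁ Y) C) ∧ W = Z * Y * Zᴴ} =
      {Y : Matrix (Fin r ⊕ Fin q) (Fin r ⊕ Fin q) ℂ | Y.PosDef ∧
        loewner (Matrix.toBlocks₁₁ Y) (Matrix.diagonal fun k => ((σ k : ℝ) : ℂ))} ∧
    Z * Cp * Zᴴ = lamMin σ

section AuxLemmas

variable {n : Type*} [Fintype n] [DecidableEq n]

lemma my_posDef_conj {A : Matrix n n ℂ}
    (hA : A.PosDef) {B : Matrix n n ℂ} (hB : IsUnit B) : (Bᴴ * A * B).PosDef := by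
  refine Matrix.PosDef.of_dotProduct_mulVec_pos (Matrix.isHermitian_conjTranspose_mul_mul B hA.1) fun x hx => ?_
  have hBx : B *ᵥ x ≠ 0 := by
    intro h
    apply hx
    have := congrArg (fun v => B⁻¹ *ᵥ v) h
    simpa [Matrix.mulVec_mulVec,
      Matrix.nonsing_inv_mul B ((Matrix.isUnit_iff_isUnit_det B).mp hB)] using this
  simpa only [star_mulVec, dotProduct_mulVec, vecMul_vecMul] using hA.dotProduct_mulVec_pos hBx

lemma my_conj_cancel {M B : Matrix n n ℂ} (hB : IsUnit B) :
    (B⁻¹)ᴴ * (Bᴴ * M * B) * B⁻¹ = M := by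
  have hBd := (Matrix.isUnit_iff_isUnit_det B).mp hB
  rw [Matrix.conjTranspose_nonsing_inv]
  calc (Bᴴ)⁻¹ * (Bᴴ * M * B) * B⁻¹
      = (Bᴴ)⁻¹ * Bᴴ * M * (B * B⁻¹) := by simp only [mul_assoc]
    _ = M := by
      rw [Matrix.nonsing_inv_mul _ (by simpa using hBd), Matrix.mul_nonsing_inv _ hBd]
      simp

lemma my_psd_conj_iff {M B : Matrix n n ℂ}
    (hB : IsUnit B) : (Bᴴ * M * B).PosSemidef ↔ M.PosSemidef := by
  constructor
  · intro h
    have h2 := h.conjTranspose_mul_mul_same B⁻¹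
    rwa [my_conj_cancel hB] at h2
  · exact fun h => h.conjTranspose_mul_mul_same B

lemma my_isUnit_inv {B : Matrix n n ℂ} (hB : IsUnit B) : IsUnit B⁻¹ :=
  Matrix.isUnit_nonsing_inv_iff.mpr hB

lemma my_posDef_conj_iff {M B : Matrix n n ℂ}
    (hB : IsUnit B) : (Bᴴ * M * B).PosDef ↔ M.PosDef := by
  constructor
  · intro h
    have h2 := my_posDef_conj h (my_isUnit_inv hB)
    rwa [my_conj_cancel hB] at h2
  · exact fun h => my_posDef_conj h hB

lemma my_eq_zero_of_mulVec (M : Matrix n n ℂ) (hv : ∀ x : n → ℂ, M *ᵥ x = 0) : M = 0 := by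
  ext i j
  have := congrFun (hv (Pi.single j 1)) i
  simpa [Matrix.mulVec_single] using this

lemma my_psd_antisymm {M : Matrix n n ℂ}
    (h1 : M.PosSemidef) (h2 : (-M).PosSemidef) : M = 0 := by
  refine my_eq_zero_of_mulVec M fun x => ?_
  rw [← (Matrix.PosSemidef.dotProduct_mulVec_zero_iff h1 x)]
  have a1 := h1.dotProduct_mulVec_nonneg x
  have a2 := h2.dotProduct_mulVec_nonneg x
  rw [Matrix.neg_mulVec, dotProduct_neg] at a2
  exact le_antisymm (neg_nonneg.mp a2) a1

lemma my_loewner_antisymm {p : ℕ} {X Y : Mat p} (h1 : loewner X Y) (h2 : loewner Y X) : X = Y := by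
  have := my_psd_antisymm h1 (by simpa [neg_sub, loewner] using h2)
  have h3 : Y - X = 0 := this
  have := sub_eq_zero.mp h3
  exact this.symm

lemma my_unitary_isUnit {U : Matrix n n ℂ} (hU : U ∈ Matrix.unitaryGroup n ℂ) : IsUnit U := by
  have h := Matrix.mem_unitaryGroup_iff.mp hU
  refine (Matrix.isUnit_iff_isUnit_det U).mpr (IsUnit.of_mul_eq_one (star U).det ?_)
  rw [← Matrix.det_mul, h, Matrix.det_one]

lemma my_perm_diag (e : Equiv.Perm n) (d : n → ℂ) :
    ∃ V ∈ Matrix.unitaryGroup n ℂ,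
      Vᴴ * Matrix.diagonal d * V = Matrix.diagonal (d ∘ e) := by
  refine ⟨Matrix.of fun i j => if i = e j then (1:ℂ) else 0, ?_, ?_⟩
  · rw [Matrix.mem_unitaryGroup_iff]
    ext k j
    simp only [Matrix.mul_apply, Matrix.star_apply, Matrix.of_apply, apply_ite (star : ℂ → ℂ), star_one, star_zero,
      Matrix.one_apply]
    calc ∑ i, (if k = e i then (1:ℂ) else 0) * (if j = e i then 1 else 0)
        = ∑ i, (if k = i then (1:ℂ) else 0) * (if j = i then 1 else 0) :=
          Equiv.sum_comp e (fun i => (if k = i then (1:ℂ) else 0) * (if j = i then 1 else 0))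
      _ = if k = j then 1 else 0 := by
          simp only [ite_mul, one_mul, zero_mul, Finset.sum_ite_eq, Finset.mem_univ, if_true]
          by_cases h : k = j <;> simp [h, eq_comm]
  · ext k j
    simp only [Matrix.mul_apply, Matrix.conjTranspose_apply, Matrix.of_apply, apply_ite (star : ℂ → ℂ), star_one,
      star_zero, Matrix.diagonal_apply, Function.comp_apply]
    calc ∑ i, (∑ l, (if l = e k then (1:ℂ) else 0) * (if l = i then d l else 0)) *
          (if i = e j then 1 else 0)
        = ∑ i, (if i = e k then d i else 0) * (if i = e j then 1 else 0) := by
          refine Finset.sum_congr rfl fun i _ => ?_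
          congr 1
          simp only [ite_mul, one_mul, zero_mul, Finset.sum_ite_eq, Finset.mem_univ, if_true]
          by_cases h : i = e k <;> simp [h, eq_comm]
      _ = if k = j then d (e k) else 0 := by
          rw [Finset.sum_eq_single (e k)]
          · by_cases h : k = j
            · subst h; simp
            · have : ¬ e k = e j := fun hh => h (e.injective hh)
              simp [h, this]
          · intro b _ hb
            simp [hb]
          · simp

end AuxLemmas

section AuxBlocks

variable {r q : ℕ}

lemma my_toBlocks₂₁_herm {D : Matrix (Fin r ⊕ Fin q) (Fin r ⊕ Fin q) ℂ} (hD : D.IsHermitian) :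
    Matrix.toBlocks₂₁ D = (Matrix.toBlocks₁₂ D)ᴴ := by
  ext i j
  simp only [Matrix.toBlocks₂₁, Matrix.toBlocks₁₂, Matrix.of_apply, Matrix.conjTranspose_apply]
  conv_lhs => rw [← hD.eq]
  rfl

lemma my_toBlocks11_add (X Y : Matrix (Fin r ⊕ Fin q) (Fin r ⊕ Fin q) ℂ) :
    Matrix.toBlocks₁₁ (X + Y) = Matrix.toBlocks₁₁ X + Matrix.toBlocks₁₁ Y := rfl

lemma my_toBlocks11_smul (c : ℂ) (X : Matrix (Fin r ⊕ Fin q) (Fin r ⊕ Fin q) ℂ) :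
    Matrix.toBlocks₁₁ (c • X) = c • Matrix.toBlocks₁₁ X := rfl

lemma my_toBlocks11_psd {X : Matrix (Fin r ⊕ Fin q) (Fin r ⊕ Fin q) ℂ} (hX : X.PosSemidef) :
    (Matrix.toBlocks₁₁ X).PosSemidef :=
  hX.submatrix Sum.inl

lemma my_blocks11_conj (A : Mat r) (Bm : Matrix (Fin r) (Fin q) ℂ) (T : Mat q)
    (W : Matrix (Fin r ⊕ Fin q) (Fin r ⊕ Fin q) ℂ) :
    Matrix.toBlocks₁₁ ((Matrix.fromBlocks A Bm 0 T)ᴴ * W * Matrix.fromBlocks A Bm 0 T)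
      = Aᴴ * Matrix.toBlocks₁₁ W * A := by
  rw [← Matrix.fromBlocks_toBlocks W]
  rw [Matrix.fromBlocks_conjTranspose, Matrix.fromBlocks_multiply, Matrix.fromBlocks_multiply,
    Matrix.toBlocks_fromBlocks₁₁]
  simp [Matrix.mul_assoc]

lemma my_LhL {D : Matrix (Fin r ⊕ Fin q) (Fin r ⊕ Fin q) ℂ} (hD : D.IsHermitian)
    (P S : Mat r) (T : Mat q)
    (hP : Pᴴ * P = 1) (hSh : Sᴴ = S) (hSS : S * S = Matrix.toBlocks₁₁ D) (hSu : IsUnit S)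
    (hTh : Tᴴ = T)
    (hTT : T * T = Matrix.toBlocks₂₂ D - (Matrix.toBlocks₁₂ D)ᴴ * (Matrix.toBlocks₁₁ D)⁻¹ *
      Matrix.toBlocks₁₂ D) :
    (Matrix.fromBlocks (P * S) (P * S⁻¹ * Matrix.toBlocks₁₂ D) 0 T)ᴴ *
      Matrix.fromBlocks (P * S) (P * S⁻¹ * Matrix.toBlocks₁₂ D) 0 T = D := by
  have hSd := (Matrix.isUnit_iff_isUnit_det S).mp hSu
  have hSih : (S⁻¹)ᴴ = S⁻¹ := by rw [Matrix.conjTranspose_nonsing_inv, hSh]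
  have hPP : ∀ {m : Type} (X : Matrix (Fin r) m ℂ), Pᴴ * (P * X) = X := by
    intro m X; rw [← Matrix.mul_assoc, hP, Matrix.one_mul]
  have hSSi : ∀ {m : Type} (X : Matrix (Fin r) m ℂ), S * (S⁻¹ * X) = X := by
    intro m X; rw [← Matrix.mul_assoc, Matrix.mul_nonsing_inv _ hSd, Matrix.one_mul]
  have hSiS : S⁻¹ * S = 1 := Matrix.nonsing_inv_mul _ hSd
  have hSiSi : ∀ {m : Type} (X : Matrix (Fin r) m ℂ),
      S⁻¹ * (S⁻¹ * X) = (Matrix.toBlocks₁₁ D)⁻¹ * X := by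
    intro m X; rw [← Matrix.mul_assoc, ← Matrix.mul_inv_rev, hSS]
  rw [Matrix.fromBlocks_conjTranspose, Matrix.fromBlocks_multiply]
  conv_rhs => rw [← Matrix.fromBlocks_toBlocks D]
  rw [Matrix.fromBlocks_inj]
  refine ⟨?_, ?_, ?_, ?_⟩
  · simp only [Matrix.conjTranspose_mul, Matrix.conjTranspose_zero, Matrix.zero_mul,
      Matrix.mul_zero, add_zero, hSh, Matrix.mul_assoc, hPP]
    rw [hSS]
  · simp only [Matrix.conjTranspose_mul, Matrix.conjTranspose_zero, Matrix.zero_mul,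
      Matrix.mul_zero, add_zero, hSh, Matrix.mul_assoc, hPP, hSSi]
  · simp only [Matrix.conjTranspose_mul, Matrix.conjTranspose_zero, Matrix.zero_mul,
      Matrix.mul_zero, add_zero, hSh, hSih, Matrix.mul_assoc, hPP]
    rw [hSiS, Matrix.mul_one, my_toBlocks₂₁_herm hD]
  · simp only [Matrix.conjTranspose_mul, Matrix.conjTranspose_zero, Matrix.zero_mul,
      Matrix.mul_zero, zero_add, hSh, hSih, hTh, Matrix.mul_assoc, hPP, hSiSi]
    rw [← Matrix.mul_assoc, hTT]
    abel

lemma my_omega_iff (C : Mat r) {A : Mat r} (hA : IsUnit A)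
    (Bm : Matrix (Fin r) (Fin q) ℂ) (T : Mat q) (σc : Fin r → ℂ)
    (hCA : Aᴴ * Matrix.diagonal σc * A = C)
    (hL : IsUnit (Matrix.fromBlocks A Bm 0 T))
    (W : Matrix (Fin r ⊕ Fin q) (Fin r ⊕ Fin q) ℂ) :
    (((Matrix.fromBlocks A Bm 0 T)ᴴ * W * Matrix.fromBlocks A Bm 0 T).PosDef ∧
      loewner (Matrix.toBlocks₁₁
        ((Matrix.fromBlocks A Bm 0 T)ᴴ * W * Matrix.fromBlocks A Bm 0 T)) C)
    ↔ (W.PosDef ∧ loewner (Matrix.toBlocks₁₁ W) (Matrix.diagonal σc)) := by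
  unfold loewner
  rw [my_blocks11_conj]
  rw [show C - Aᴴ * Matrix.toBlocks₁₁ W * A
      = Aᴴ * (Matrix.diagonal σc - Matrix.toBlocks₁₁ W) * A from by
    rw [Matrix.mul_sub, Matrix.sub_mul, hCA]]
  rw [my_psd_conj_iff hA, my_posDef_conj_iff hL]

lemma my_set_eq (C : Mat r) {A : Mat r} (hA : IsUnit A)
    (Bm : Matrix (Fin r) (Fin q) ℂ) (T : Mat q) (σc : Fin r → ℂ)
    (hCA : Aᴴ * Matrix.diagonal σc * A = C)
    (hL : IsUnit (Matrix.fromBlocks A Bm 0 T)) :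
    {W | ∃ Y : Matrix (Fin r ⊕ Fin q) (Fin r ⊕ Fin q) ℂ,
        (Y.PosDef ∧ loewner (Matrix.toBlocks₁₁ Y) C) ∧
        W = ((Matrix.fromBlocks A Bm 0 T)ᴴ)⁻¹ * Y * (((Matrix.fromBlocks A Bm 0 T)ᴴ)⁻¹)ᴴ} =
      {Y : Matrix (Fin r ⊕ Fin q) (Fin r ⊕ Fin q) ℂ | Y.PosDef ∧
        loewner (Matrix.toBlocks₁₁ Y) (Matrix.diagonal σc)} := by
  set L := Matrix.fromBlocks A Bm 0 T with hLdef
  have hLd := (Matrix.isUnit_iff_isUnit_det L).mp hL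
  have hLHd : IsUnit Lᴴ.det := by
    rw [Matrix.det_conjTranspose]; exact hLd.star
  have hZH : ((Lᴴ)⁻¹)ᴴ = L⁻¹ := by
    rw [← Matrix.conjTranspose_nonsing_inv, Matrix.conjTranspose_conjTranspose]
  have hcancel : ∀ Y : Matrix (Fin r ⊕ Fin q) (Fin r ⊕ Fin q) ℂ,
      Lᴴ * ((Lᴴ)⁻¹ * Y * (((Lᴴ)⁻¹)ᴴ)) * L = Y := by
    intro Y
    rw [hZH]
    calc Lᴴ * ((Lᴴ)⁻¹ * Y * L⁻¹) * L = (Lᴴ * (Lᴴ)⁻¹) * Y * (L⁻¹ * L) := by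
          simp only [Matrix.mul_assoc]
      _ = Y := by
          rw [Matrix.mul_nonsing_inv _ hLHd, Matrix.nonsing_inv_mul _ hLd,
            Matrix.one_mul, Matrix.mul_one]
  ext W
  simp only [Set.mem_setOf_eq]
  constructor
  · rintro ⟨Y, hY, rfl⟩
    have h2 := (my_omega_iff C hA Bm T σc hCA hL ((Lᴴ)⁻¹ * Y * (((Lᴴ)⁻¹)ᴴ))).mp
    rw [← hLdef, hcancel Y] at h2
    exact h2 hY
  · intro hW
    refine ⟨Lᴴ * W * L, ?_, ?_⟩
    · exact (my_omega_iff C hA Bm T σc hCA hL W).mpr hW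
    · rw [hZH]
      calc W = ((Lᴴ)⁻¹ * Lᴴ) * W * (L * L⁻¹) := by
            rw [Matrix.nonsing_inv_mul _ hLHd, Matrix.mul_nonsing_inv _ hLd,
              Matrix.one_mul, Matrix.mul_one]
        _ = (Lᴴ)⁻¹ * (Lᴴ * W * L) * L⁻¹ := by simp only [Matrix.mul_assoc]

lemma my_recession {n : Type*} [Fintype n] [DecidableEq n] {M R : Matrix n n ℂ}
    (hM : M.PosSemidef)
    (h : ∀ t : ℝ, 0 ≤ t → (R - (t : ℂ) • M).PosSemidef) : M = 0 := by
  refine my_eq_zero_of_mulVec M fun x => ?_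
  rw [← (Matrix.PosSemidef.dotProduct_mulVec_zero_iff hM x)]
  set a := star x ⬝ᵥ M *ᵥ x with hadef
  set b := star x ⬝ᵥ R *ᵥ x with hbdef
  have ha : 0 ≤ a := hM.dotProduct_mulVec_nonneg x
  have hb : ∀ t : ℝ, 0 ≤ t → (t : ℂ) * a ≤ b := by
    intro t ht
    have h2 := (h t ht).dotProduct_mulVec_nonneg x
    rw [Matrix.sub_mulVec, dotProduct_sub, Matrix.smul_mulVec, dotProduct_smul,
      smul_eq_mul] at h2
    rw [← hadef, ← hbdef] at h2
    exact sub_nonneg.mp h2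
  by_contra hne
  have hapos : 0 < a := lt_of_le_of_ne ha (Ne.symm hne)
  have hare : 0 < a.re := (Complex.lt_def.mp hapos).1
  have hbre : ∀ t : ℝ, 0 ≤ t → t * a.re ≤ b.re := by
    intro t ht
    have := (Complex.le_def.mp (hb t ht)).1
    simpa [Complex.mul_re, Complex.ofReal_re, Complex.ofReal_im] using this
  have ht0 : (0:ℝ) ≤ (b.re + 1) / a.re := by
    have hb0 : 0 ≤ b.re := by simpa using hbre 0 le_rfl
    positivity
  have := hbre _ ht0
  rw [div_mul_cancel₀ _ (ne_of_gt hare)] at this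
  linarith

end AuxBlocks

section AuxMain

variable {r q : ℕ}

lemma my_sqrt_mul_self {p : ℕ} {X : Mat p} (hX : X.PosSemidef) : hX.sqrt * hX.sqrt = X := by
  unfold PosSemidef.sqrt
  have hU : (star hX.1.eigenvectorUnitary : Mat p) * (hX.1.eigenvectorUnitary : Mat p) = 1 :=
    Unitary.coe_star_mul_self _
  have hd : diagonal ((RCLike.ofReal : ℝ → ℂ) ∘ Real.sqrt ∘ hX.1.eigenvalues) *
      diagonal ((RCLike.ofReal : ℝ → ℂ) ∘ Real.sqrt ∘ hX.1.eigenvalues)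
      = diagonal ((RCLike.ofReal : ℝ → ℂ) ∘ hX.1.eigenvalues) := by
    rw [diagonal_mul_diagonal]
    congr 1
    funext i
    simp only [Function.comp_apply, ← RCLike.ofReal_mul, Real.mul_self_sqrt (hX.eigenvalues_nonneg i)]
  calc _ = (hX.1.eigenvectorUnitary : Mat p) * (diagonal ((RCLike.ofReal : ℝ → ℂ) ∘ Real.sqrt ∘ hX.1.eigenvalues) *
      ((star hX.1.eigenvectorUnitary : Mat p) * (hX.1.eigenvectorUnitary : Mat p)) *
      diagonal ((RCLike.ofReal : ℝ → ℂ) ∘ Real.sqrt ∘ hX.1.eigenvalues)) *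
      (star hX.1.eigenvectorUnitary : Mat p) := by simp only [Matrix.mul_assoc]
    _ = X := by
      rw [hU, Matrix.mul_one, hd]
      conv_rhs => rw [hX.1.spectral_theorem]
      simp [Unitary.conjStarAlgAut_apply]

lemma my_sqrt_isUnit {p : ℕ} {X : Mat p} (hX : X.PosDef) : IsUnit hX.posSemidef.sqrt := by
  refine (Matrix.isUnit_iff_isUnit_det _).mpr ?_
  have h2 : IsUnit (hX.posSemidef.sqrt.det * hX.posSemidef.sqrt.det) := by
    rw [← Matrix.det_mul, my_sqrt_mul_self hX.posSemidef]
    exact (Matrix.isUnit_iff_isUnit_det X).mp hX.isUnit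
  exact isUnit_of_mul_isUnit_left h2

lemma my_relEigs_posDef {C D11 : Mat r} (hC : C.PosDef) (hD11 : D11.PosDef) :
    (hD11.posSemidef.sqrt⁻¹ * C * hD11.posSemidef.sqrt⁻¹).PosDef := by
  have hSu := my_sqrt_isUnit hD11
  have hSih : (hD11.posSemidef.sqrt⁻¹)ᴴ = hD11.posSemidef.sqrt⁻¹ := by
    rw [Matrix.conjTranspose_nonsing_inv, hD11.posSemidef.posSemidef_sqrt.isHermitian.eq]
  rw [show hD11.posSemidef.sqrt⁻¹ * C * hD11.posSemidef.sqrt⁻¹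
      = (hD11.posSemidef.sqrt⁻¹)ᴴ * C * hD11.posSemidef.sqrt⁻¹ from by rw [hSih]]
  exact my_posDef_conj hC (my_isUnit_inv hSu)

lemma my_relEigsDesc_pos {C D11 : Mat r} (hC : C.PosDef) (hD11 : D11.PosDef) (k : Fin r) :
    0 < relEigsDesc hD11 hC.isHermitian k := by
  have h := my_relEigs_posDef hC hD11
  simp only [relEigsDesc, relEigs, Function.comp_apply]
  exact h.eigenvalues_pos _

lemma my_lamMin_posDef {σ : Fin r → ℝ} (hσ : ∀ k, 0 < σ k) : (lamMin (q := q) σ).PosDef := by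
  unfold lamMin
  rw [Matrix.posDef_diagonal_iff]
  rintro (k | k)
  · simpa using Complex.zero_lt_real.mpr (lt_min one_pos (hσ k))
  · simpa using (zero_lt_one : (0:ℂ) < 1)

lemma my_exists_P {C D11 : Mat r} (hC : C.PosDef) (hD11 : D11.PosDef) :
    ∃ P ∈ Matrix.unitaryGroup (Fin r) ℂ,
      Pᴴ * (Matrix.diagonal fun k => ((relEigsDesc hD11 hC.isHermitian k : ℝ) : ℂ)) * P =
        hD11.posSemidef.sqrt⁻¹ * C * hD11.posSemidef.sqrt⁻¹ := by
  have hM : (hD11.posSemidef.sqrt⁻¹ * C * hD11.posSemidef.sqrt⁻¹).IsHermitian :=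
    (my_relEigs_posDef hC hD11).isHermitian
  set π : Equiv.Perm (Fin r) :=
    Fin.revPerm.trans (Tuple.sort (relEigs hD11 hC.isHermitian)) with hπdef
  obtain ⟨V, hVu, hVd⟩ := my_perm_diag π (fun k => ((hM.eigenvalues k : ℝ) : ℂ))
  have hdiag : (Matrix.diagonal fun k => ((relEigsDesc hD11 hC.isHermitian k : ℝ) : ℂ))
      = Vᴴ * Matrix.diagonal (fun k => ((hM.eigenvalues k : ℝ) : ℂ)) * V := by
    rw [hVd]
    congr 1
  have hcoe : (RCLike.ofReal ∘ hM.eigenvalues : Fin r → ℂ)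
      = fun k => ((hM.eigenvalues k : ℝ) : ℂ) := by
    funext k
    rw [Function.comp_apply, ← Complex.coe_algebraMap]
  obtain ⟨U, hUmem, hspec⟩ :
      ∃ U ∈ Matrix.unitaryGroup (Fin r) ℂ,
        hD11.posSemidef.sqrt⁻¹ * C * hD11.posSemidef.sqrt⁻¹
          = U * Matrix.diagonal (fun k => ((hM.eigenvalues k : ℝ) : ℂ)) * star U :=
    ⟨_, hM.eigenvectorUnitary.2, by rw [← hcoe]; exact hM.spectral_theorem⟩
  refine ⟨Vᴴ * (star U), ?_, ?_⟩
  · exact mul_mem (Unitary.star_mem hVu) (Unitary.star_mem hUmem)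
  · have hPH : (Vᴴ * star U)ᴴ = U * V := by
      rw [Matrix.conjTranspose_mul, Matrix.conjTranspose_conjTranspose,
        Matrix.star_eq_conjTranspose, Matrix.conjTranspose_conjTranspose]
    rw [hdiag, hPH]
    conv_rhs => rw [hspec]
    have hVV : ∀ X : Matrix (Fin r) (Fin r) ℂ, V * (Vᴴ * X) = X := by
      intro X
      have h1 : V * Vᴴ = 1 := Matrix.mem_unitaryGroup_iff.mp hVu
      rw [← Matrix.mul_assoc, h1, Matrix.one_mul]
    simp only [Matrix.mul_assoc, hVV]

lemma my_main (C : Mat r) (hC : C.PosDef)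
    (D : Matrix (Fin r ⊕ Fin q) (Fin r ⊕ Fin q) ℂ) (hD : D.PosDef)
    (hD11 : (Matrix.toBlocks₁₁ D).PosDef)
    (hS : (Matrix.toBlocks₂₂ D - (Matrix.toBlocks₁₂ D)ᴴ * (Matrix.toBlocks₁₁ D)⁻¹ *
      Matrix.toBlocks₁₂ D).PosDef)
    (P : Mat r) (hPu : P ∈ Matrix.unitaryGroup (Fin r) ℂ)
    (hP : Pᴴ * (Matrix.diagonal fun k => ((relEigsDesc hD11 hC.isHermitian k : ℝ) : ℂ)) * P =
        hD11.posSemidef.sqrt⁻¹ * C * hD11.posSemidef.sqrt⁻¹) :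
    IsLift C D (relEigsDesc hD11 hC.isHermitian)
      ((Matrix.fromBlocks (P * hD11.posSemidef.sqrt)
          (P * hD11.posSemidef.sqrt⁻¹ * Matrix.toBlocks₁₂ D) 0 hS.posSemidef.sqrt)ᴴ *
        lamMin (relEigsDesc hD11 hC.isHermitian) *
        Matrix.fromBlocks (P * hD11.posSemidef.sqrt)
          (P * hD11.posSemidef.sqrt⁻¹ * Matrix.toBlocks₁₂ D) 0 hS.posSemidef.sqrt) := by
  have hσpos : ∀ k, 0 < relEigsDesc hD11 hC.isHermitian k :=
    fun k => my_relEigsDesc_pos hC hD11 k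
  set σ : Fin r → ℝ := relEigsDesc hD11 hC.isHermitian with hσdef
  set Sm := hD11.posSemidef.sqrt with hSmdef
  set Tm := hS.posSemidef.sqrt with hTmdef
  set Bm := Matrix.toBlocks₁₂ D with hBmdef
  set L := Matrix.fromBlocks (P * Sm) (P * Sm⁻¹ * Bm) 0 Tm with hLdef
  have hPh : Pᴴ * P = 1 := (Unitary.mem_iff.mp hPu).1
  have hSmh : Smᴴ = Sm := hD11.posSemidef.posSemidef_sqrt.isHermitian
  have hSmu : IsUnit Sm := my_sqrt_isUnit hD11
  have hSmd := (Matrix.isUnit_iff_isUnit_det Sm).mp hSmu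
  have hTmh : Tmᴴ = Tm := hS.posSemidef.posSemidef_sqrt.isHermitian
  have hTmu : IsUnit Tm := my_sqrt_isUnit hS
  have hAu : IsUnit (P * Sm) := (my_unitary_isUnit hPu).mul hSmu
  have hLu : IsUnit L := by rw [hLdef]; exact Matrix.isUnit_fromBlocks_zero₂₁.mpr ⟨hAu, hTmu⟩
  have hCA : (P * Sm)ᴴ * Matrix.diagonal (fun k => ((σ k : ℝ) : ℂ)) * (P * Sm) = C := by
    rw [Matrix.conjTranspose_mul, hSmh]
    calc Sm * Pᴴ * Matrix.diagonal (fun k => ((σ k : ℝ) : ℂ)) * (P * Sm)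
        = Sm * (Pᴴ * Matrix.diagonal (fun k => ((σ k : ℝ) : ℂ)) * P) * Sm := by
          simp only [Matrix.mul_assoc]
      _ = Sm * (Sm⁻¹ * C * Sm⁻¹) * Sm := by rw [hP]
      _ = (Sm * Sm⁻¹) * C * (Sm⁻¹ * Sm) := by simp only [Matrix.mul_assoc]
      _ = C := by
          rw [Matrix.mul_nonsing_inv _ hSmd, Matrix.nonsing_inv_mul _ hSmd,
            Matrix.one_mul, Matrix.mul_one]
  have hLL : Lᴴ * L = D := by
    rw [hLdef]
    exact my_LhL hD.isHermitian P Sm Tm hPh hSmh (my_sqrt_mul_self hD11.posSemidef) hSmu hTmh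
      (my_sqrt_mul_self hS.posSemidef)
  have hLd := (Matrix.isUnit_iff_isUnit_det L).mp hLu
  have hLHd : IsUnit (Lᴴ).det := by rw [Matrix.det_conjTranspose]; exact hLd.star
  have hLHu : IsUnit (Lᴴ) := (Matrix.isUnit_iff_isUnit_det _).mpr hLHd
  have hZH : ((Lᴴ)⁻¹)ᴴ = L⁻¹ := by
    rw [← Matrix.conjTranspose_nonsing_inv, Matrix.conjTranspose_conjTranspose]
  have hΛ : (lamMin (q := q) σ).PosDef := my_lamMin_posDef hσpos
  constructor
  · constructor
    · exact my_posDef_conj hΛ hLu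
    · unfold loewner
      rw [hLdef, my_blocks11_conj]
      have h1 : Matrix.toBlocks₁₁ (lamMin (q := q) σ)
          = Matrix.diagonal (fun k => ((min 1 (σ k) : ℝ) : ℂ)) := by
        unfold lamMin; simp
      rw [h1]
      have h2 : C - (P * Sm)ᴴ * Matrix.diagonal (fun k => ((min 1 (σ k) : ℝ) : ℂ)) * (P * Sm)
          = (P * Sm)ᴴ * (Matrix.diagonal (fun k => ((σ k : ℝ) : ℂ))
              - Matrix.diagonal (fun k => ((min 1 (σ k) : ℝ) : ℂ))) * (P * Sm) := by
        rw [Matrix.mul_sub, Matrix.sub_mul, hCA]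
      rw [h2, Matrix.diagonal_sub]
      refine Matrix.PosSemidef.conjTranspose_mul_mul_same ?_ _
      refine Matrix.PosSemidef.diagonal fun k => ?_
      rw [← Complex.ofReal_sub]
      simpa using Complex.zero_le_real.mpr (sub_nonneg.mpr (min_le_right 1 (σ k)))
  refine ⟨(Lᴴ)⁻¹, my_isUnit_inv hLHu, ?_, ?_, ?_⟩
  · rw [hZH, ← hLL]
    calc (Lᴴ)⁻¹ * (Lᴴ * L) * L⁻¹ = ((Lᴴ)⁻¹ * Lᴴ) * (L * L⁻¹) := by
          simp only [Matrix.mul_assoc]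
      _ = 1 := by
          rw [Matrix.nonsing_inv_mul _ hLHd, Matrix.mul_nonsing_inv _ hLd, Matrix.mul_one]
  · exact my_set_eq C hAu (P * Sm⁻¹ * Bm) Tm (fun k => ((σ k : ℝ) : ℂ)) hCA (hLdef ▸ hLu)
  · rw [hZH]
    calc (Lᴴ)⁻¹ * (Lᴴ * lamMin σ * L) * L⁻¹
        = ((Lᴴ)⁻¹ * Lᴴ) * lamMin σ * (L * L⁻¹) := by simp only [Matrix.mul_assoc]
      _ = lamMin σ := by
          rw [Matrix.nonsing_inv_mul _ hLHd, Matrix.mul_nonsing_inv _ hLd,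
            Matrix.one_mul, Matrix.mul_one]

end AuxMain

section AuxUnique

variable {r q : ℕ}

lemma my_lift_unique {C : Mat r} {D : Matrix (Fin r ⊕ Fin q) (Fin r ⊕ Fin q) ℂ}
    {σ : Fin r → ℝ} (hσ : ∀ k, 0 < σ k)
    {Cp Cp' : Matrix (Fin r ⊕ Fin q) (Fin r ⊕ Fin q) ℂ}
    (h1 : IsLift C D σ Cp) (h2 : IsLift C D σ Cp') : Cp = Cp' := by
  obtain ⟨-, Z, hZu, hZD, hZS, hZC⟩ := h1
  obtain ⟨-, Z', hZu', hZD', hZS', hZC'⟩ := h2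
  have hZd := (Matrix.isUnit_iff_isUnit_det Z).mp hZu
  have hZd' := (Matrix.isUnit_iff_isUnit_det Z').mp hZu'
  have hZHd : IsUnit (Zᴴ).det := by rw [Matrix.det_conjTranspose]; exact hZd.star
  have hZHd' : IsUnit (Z'ᴴ).det := by rw [Matrix.det_conjTranspose]; exact hZd'.star
  have hDeq : D = Z⁻¹ * (Zᴴ)⁻¹ := by
    calc D = (Z⁻¹ * Z) * D * (Zᴴ * (Zᴴ)⁻¹) := by
          rw [Matrix.nonsing_inv_mul _ hZd, Matrix.mul_nonsing_inv _ hZHd,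
            Matrix.one_mul, Matrix.mul_one]
      _ = Z⁻¹ * (Z * D * Zᴴ) * (Zᴴ)⁻¹ := by simp only [Matrix.mul_assoc]
      _ = Z⁻¹ * (Zᴴ)⁻¹ := by rw [hZD, Matrix.mul_one]
  set Q := Z' * Z⁻¹ with hQdef
  have hQ1 : Q * Qᴴ = 1 := by
    rw [hQdef, Matrix.conjTranspose_mul, Matrix.conjTranspose_nonsing_inv]
    calc Z' * Z⁻¹ * ((Zᴴ)⁻¹ * Z'ᴴ) = Z' * (Z⁻¹ * (Zᴴ)⁻¹) * Z'ᴴ := by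
          simp only [Matrix.mul_assoc]
      _ = Z' * D * Z'ᴴ := by rw [← hDeq]
      _ = 1 := hZD'
  have hQ2 : Qᴴ * Q = 1 := mul_eq_one_comm.mp hQ1
  have hQZ : Q * Z = Z' := by
    rw [hQdef, Matrix.mul_assoc, Matrix.nonsing_inv_mul _ hZd, Matrix.mul_one]
  have hQZ' : Qᴴ * Z' = Z := by
    rw [← hQZ, ← Matrix.mul_assoc, hQ2, Matrix.one_mul]
  set σc : Fin r → ℂ := fun k => ((σ k : ℝ) : ℂ) with hσc
  have hpres : ∀ W : Matrix (Fin r ⊕ Fin q) (Fin r ⊕ Fin q) ℂ,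
      W.PosDef ∧ loewner (Matrix.toBlocks₁₁ W) (Matrix.diagonal σc) →
      (Q * W * Qᴴ).PosDef ∧ loewner (Matrix.toBlocks₁₁ (Q * W * Qᴴ)) (Matrix.diagonal σc) := by
    intro W hW
    have hmem : W ∈ {Y : Matrix (Fin r ⊕ Fin q) (Fin r ⊕ Fin q) ℂ | Y.PosDef ∧
        loewner (Matrix.toBlocks₁₁ Y) (Matrix.diagonal fun k => ((σ k : ℝ) : ℂ))} := hW
    rw [← hZS] at hmem
    obtain ⟨Y, hY, rfl⟩ := hmem
    have h3 : Q * (Z * Y * Zᴴ) * Qᴴ = Z' * Y * Z'ᴴ := by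
      have hZH2 : Zᴴ * Qᴴ = Z'ᴴ := by rw [← Matrix.conjTranspose_mul, hQZ]
      calc Q * (Z * Y * Zᴴ) * Qᴴ = (Q * Z) * Y * (Zᴴ * Qᴴ) := by simp only [Matrix.mul_assoc]
        _ = Z' * Y * Z'ᴴ := by rw [hQZ, hZH2]
    rw [h3]
    have : Z' * Y * Z'ᴴ ∈ {Y : Matrix (Fin r ⊕ Fin q) (Fin r ⊕ Fin q) ℂ | Y.PosDef ∧
        loewner (Matrix.toBlocks₁₁ Y) (Matrix.diagonal fun k => ((σ k : ℝ) : ℂ))} := by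
      rw [← hZS']
      exact ⟨Y, hY, rfl⟩
    exact this
  have hpres' : ∀ W : Matrix (Fin r ⊕ Fin q) (Fin r ⊕ Fin q) ℂ,
      W.PosDef ∧ loewner (Matrix.toBlocks₁₁ W) (Matrix.diagonal σc) →
      (Qᴴ * W * Q).PosDef ∧ loewner (Matrix.toBlocks₁₁ (Qᴴ * W * Q)) (Matrix.diagonal σc) := by
    intro W hW
    have hmem : W ∈ {Y : Matrix (Fin r ⊕ Fin q) (Fin r ⊕ Fin q) ℂ | Y.PosDef ∧
        loewner (Matrix.toBlocks₁₁ Y) (Matrix.diagonal fun k => ((σ k : ℝ) : ℂ))} := hW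
    rw [← hZS'] at hmem
    obtain ⟨Y, hY, rfl⟩ := hmem
    have h3 : Qᴴ * (Z' * Y * Z'ᴴ) * Q = Z * Y * Zᴴ := by
      have hZH2 : Z'ᴴ * Q = Zᴴ := by
        conv_lhs => rw [show Q = Qᴴᴴ from (Matrix.conjTranspose_conjTranspose Q).symm]
        rw [← Matrix.conjTranspose_mul, hQZ']
      calc Qᴴ * (Z' * Y * Z'ᴴ) * Q = (Qᴴ * Z') * Y * (Z'ᴴ * Q) := by simp only [Matrix.mul_assoc]
        _ = Z * Y * Zᴴ := by rw [hQZ', hZH2]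
    rw [h3]
    have : Z * Y * Zᴴ ∈ {Y : Matrix (Fin r ⊕ Fin q) (Fin r ⊕ Fin q) ℂ | Y.PosDef ∧
        loewner (Matrix.toBlocks₁₁ Y) (Matrix.diagonal fun k => ((σ k : ℝ) : ℂ))} := by
      rw [← hZS]
      exact ⟨Y, hY, rfl⟩
    exact this
  -- blocks of Q
  set a := Matrix.toBlocks₁₁ Q with hadef
  set b := Matrix.toBlocks₁₂ Q with hbdef
  set c := Matrix.toBlocks₂₁ Q with hcdef
  set d := Matrix.toBlocks₂₂ Q with hddef
  have hQblocks : Q = Matrix.fromBlocks a b c d := (Matrix.fromBlocks_toBlocks Q).symm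
  -- the recession direction
  set N : Matrix (Fin r ⊕ Fin q) (Fin r ⊕ Fin q) ℂ :=
    Matrix.diagonal (Sum.elim (0 : Fin r → ℂ) fun _ => (1 : ℂ)) with hNdef
  have hN : N.PosSemidef := by
    refine Matrix.PosSemidef.diagonal ?_
    rintro (k | k) <;> simp
  set W0 : Matrix (Fin r ⊕ Fin q) (Fin r ⊕ Fin q) ℂ :=
    Matrix.diagonal (Sum.elim σc fun _ => (1 : ℂ)) with hW0def
  have hWt : ∀ t : ℝ, 0 ≤ t → (W0 + (t : ℂ) • N).PosDef ∧
      loewner (Matrix.toBlocks₁₁ (W0 + (t : ℂ) • N)) (Matrix.diagonal σc) := by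
    intro t ht
    have hform : W0 + (t : ℂ) • N
        = Matrix.diagonal (Sum.elim σc fun _ => 1 + (t : ℂ)) := by
      rw [hW0def, hNdef, ← Matrix.diagonal_smul, Matrix.diagonal_add]
      refine congrArg Matrix.diagonal ?_
      funext i
      rcases i with k | k <;> simp
    rw [hform]
    constructor
    · rw [Matrix.posDef_diagonal_iff]
      rintro (k | k)
      · simp only [Sum.elim_inl, hσc]
        exact Complex.zero_lt_real.mpr (hσ k)
      · simp only [Sum.elim_inr]
        rw [show (1 + (t : ℂ)) = (((1 + t : ℝ)) : ℂ) by push_cast; ring]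
        exact Complex.zero_lt_real.mpr (by linarith)
    · unfold loewner
      rw [Matrix.toBlocks₁₁_diagonal]
      have h4 : (fun i => Sum.elim σc (fun _ : Fin q => 1 + (t : ℂ)) (Sum.inl i)) = σc := by
        funext k; simp
      rw [h4, sub_self]
      exact Matrix.PosSemidef.zero
  have hW0mem : W0.PosDef ∧ loewner (Matrix.toBlocks₁₁ W0) (Matrix.diagonal σc) := by
    have := hWt 0 le_rfl
    simpa using this
  have hMzero : Matrix.toBlocks₁₁ (Q * N * Qᴴ) = 0 := by
    refine my_recession (my_toBlocks11_psd (hN.mul_mul_conjTranspose_same Q))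
      (R := Matrix.diagonal σc - Matrix.toBlocks₁₁ (Q * W0 * Qᴴ)) ?_
    intro t ht
    have hmem := hpres _ (hWt t ht)
    have hexp : Q * (W0 + (t : ℂ) • N) * Qᴴ = Q * W0 * Qᴴ + (t : ℂ) • (Q * N * Qᴴ) := by
      rw [Matrix.mul_add, Matrix.add_mul, Matrix.mul_smul, Matrix.smul_mul]
    have h5 := hmem.2
    unfold loewner at h5
    rw [hexp, my_toBlocks11_add, my_toBlocks11_smul] at h5
    rw [sub_sub]
    exact h5
  have hb : b = 0 := by
    have h6 : Matrix.toBlocks₁₁ (Q * N * Qᴴ) = b * bᴴ := by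
      conv_lhs => rw [hQblocks, hNdef]
      rw [show (Matrix.diagonal (Sum.elim (0 : Fin r → ℂ) fun _ => (1 : ℂ)))
          = Matrix.fromBlocks (Matrix.diagonal (0 : Fin r → ℂ)) 0 0
              (Matrix.diagonal fun _ : Fin q => (1 : ℂ)) from
        (Matrix.fromBlocks_diagonal _ _).symm]
      rw [Matrix.fromBlocks_conjTranspose, Matrix.fromBlocks_multiply,
        Matrix.fromBlocks_multiply, Matrix.toBlocks_fromBlocks₁₁]
      simp [show Matrix.diagonal (0 : Fin r → ℂ) = (0 : Mat r) from Matrix.diagonal_zero]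
    rw [h6] at hMzero
    exact Matrix.self_mul_conjTranspose_eq_zero.mp hMzero
  have hQQH := hQ1
  rw [hQblocks, hb, Matrix.fromBlocks_conjTranspose, Matrix.fromBlocks_multiply,
    ← Matrix.fromBlocks_one, Matrix.fromBlocks_inj] at hQQH
  simp only [Matrix.conjTranspose_zero, Matrix.mul_zero, Matrix.zero_mul, add_zero,
    zero_add] at hQQH
  obtain ⟨haa, hac, hca, hccdd⟩ := hQQH
  have haHa : aᴴ * a = 1 := mul_eq_one_comm.mp haa
  have hc : c = 0 := by
    have h7 : cᴴ = 0 := by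
      calc cᴴ = (aᴴ * a) * cᴴ := by rw [haHa, Matrix.one_mul]
        _ = aᴴ * (a * cᴴ) := by rw [Matrix.mul_assoc]
        _ = 0 := by rw [hac, Matrix.mul_zero]
    calc c = cᴴᴴ := (Matrix.conjTranspose_conjTranspose c).symm
      _ = 0 := by rw [h7, Matrix.conjTranspose_zero]
  have hdd : d * dᴴ = 1 := by
    rw [hc] at hccdd
    simpa using hccdd
  have hdHd : dᴴ * d = 1 := mul_eq_one_comm.mp hdd
  -- a commutes with diagonal σc
  have hQW0 : Matrix.toBlocks₁₁ (Q * W0 * Qᴴ) = a * Matrix.diagonal σc * aᴴ := by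
    conv_lhs => rw [hQblocks, hb, hc, hW0def]
    rw [show (Matrix.diagonal (Sum.elim σc fun _ => (1 : ℂ)))
        = Matrix.fromBlocks (Matrix.diagonal σc) 0 0
            (Matrix.diagonal fun _ : Fin q => (1 : ℂ)) from
      (Matrix.fromBlocks_diagonal _ _).symm]
    rw [Matrix.fromBlocks_conjTranspose, Matrix.fromBlocks_multiply,
      Matrix.fromBlocks_multiply, Matrix.toBlocks_fromBlocks₁₁]
    simp
  have hQHW0 : Matrix.toBlocks₁₁ (Qᴴ * W0 * Q) = aᴴ * Matrix.diagonal σc * a := by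
    conv_lhs => rw [hQblocks, hb, hc, hW0def]
    rw [show (Matrix.diagonal (Sum.elim σc fun _ => (1 : ℂ)))
        = Matrix.fromBlocks (Matrix.diagonal σc) 0 0
            (Matrix.diagonal fun _ : Fin q => (1 : ℂ)) from
      (Matrix.fromBlocks_diagonal _ _).symm]
    rw [Matrix.fromBlocks_conjTranspose, Matrix.fromBlocks_multiply,
      Matrix.fromBlocks_multiply, Matrix.toBlocks_fromBlocks₁₁]
    simp
  have hup : loewner (a * Matrix.diagonal σc * aᴴ) (Matrix.diagonal σc) := by
    have := (hpres W0 hW0mem).2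
    rwa [hQW0] at this
  have hdown : loewner (aᴴ * Matrix.diagonal σc * a) (Matrix.diagonal σc) := by
    have := (hpres' W0 hW0mem).2
    rwa [hQHW0] at this
  have hfix : aᴴ * Matrix.diagonal σc * a = Matrix.diagonal σc := by
    have h3 : loewner (Matrix.diagonal σc) (aᴴ * Matrix.diagonal σc * a) := by
      unfold loewner at hup ⊢
      have h8 := hup.conjTranspose_mul_mul_same a
      rw [Matrix.mul_sub, Matrix.sub_mul] at h8
      have h9 : aᴴ * (a * Matrix.diagonal σc * aᴴ) * a = Matrix.diagonal σc := by
        calc aᴴ * (a * Matrix.diagonal σc * aᴴ) * a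
            = (aᴴ * a) * Matrix.diagonal σc * (aᴴ * a) := by simp only [Matrix.mul_assoc]
          _ = Matrix.diagonal σc := by rw [haHa, Matrix.one_mul, Matrix.mul_one]
      rwa [h9] at h8
    exact my_loewner_antisymm hdown h3
  have hcomm : a * Matrix.diagonal σc = Matrix.diagonal σc * a := by
    calc a * Matrix.diagonal σc = a * (aᴴ * Matrix.diagonal σc * a) := by rw [hfix]
      _ = (a * aᴴ) * Matrix.diagonal σc * a := by simp only [Matrix.mul_assoc]
      _ = Matrix.diagonal σc * a := by rw [haa, Matrix.one_mul]
  set Λc : Fin r → ℂ := fun k => ((min 1 (σ k) : ℝ) : ℂ) with hΛc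
  have hcommΛ : a * Matrix.diagonal Λc = Matrix.diagonal Λc * a := by
    ext i j
    rw [Matrix.mul_diagonal, Matrix.diagonal_mul]
    by_cases hz : a i j = 0
    · rw [hz]; ring
    · have hσeq : σ j = σ i := by
        have h10 := congrFun (congrFun hcomm i) j
        rw [Matrix.mul_diagonal, Matrix.diagonal_mul] at h10
        have h11 : σc j = σc i := by
          rw [mul_comm (σc i) (a i j)] at h10
          exact mul_left_cancel₀ hz h10
        have h12 : ((σ j : ℝ) : ℂ) = ((σ i : ℝ) : ℂ) := by simpa [hσc] using h11
        exact_mod_cast h12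
      simp only [hΛc, hσeq]
      exact mul_comm _ _
  have hfixΛ : aᴴ * Matrix.diagonal Λc * a = Matrix.diagonal Λc := by
    calc aᴴ * Matrix.diagonal Λc * a = aᴴ * (Matrix.diagonal Λc * a) := by
          rw [Matrix.mul_assoc]
      _ = aᴴ * (a * Matrix.diagonal Λc) := by rw [hcommΛ]
      _ = (aᴴ * a) * Matrix.diagonal Λc := by rw [Matrix.mul_assoc]
      _ = Matrix.diagonal Λc := by rw [haHa, Matrix.one_mul]
  have hΛfix : Qᴴ * lamMin σ * Q = lamMin σ := by
    conv_lhs => rw [hQblocks, hb, hc]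
    have hlam : lamMin (q := q) σ
        = Matrix.fromBlocks (Matrix.diagonal Λc) 0 0
            (Matrix.diagonal fun _ : Fin q => (1 : ℂ)) := by
      rw [Matrix.fromBlocks_diagonal, hΛc]
      rfl
    rw [hlam, Matrix.fromBlocks_conjTranspose, Matrix.fromBlocks_multiply,
      Matrix.fromBlocks_multiply]
    rw [Matrix.fromBlocks_inj]
    refine ⟨?_, ?_, ?_, ?_⟩
    · simpa using hfixΛ
    · simp
    · simp
    · simpa [Matrix.diagonal_one] using hdHd
  have hCpeq : Cp = Z⁻¹ * lamMin σ * (Zᴴ)⁻¹ := by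
    calc Cp = (Z⁻¹ * Z) * Cp * (Zᴴ * (Zᴴ)⁻¹) := by
          rw [Matrix.nonsing_inv_mul _ hZd, Matrix.mul_nonsing_inv _ hZHd,
            Matrix.one_mul, Matrix.mul_one]
      _ = Z⁻¹ * (Z * Cp * Zᴴ) * (Zᴴ)⁻¹ := by simp only [Matrix.mul_assoc]
      _ = Z⁻¹ * lamMin σ * (Zᴴ)⁻¹ := by rw [hZC]
  have hCpeq' : Cp' = Z'⁻¹ * lamMin σ * (Z'ᴴ)⁻¹ := by
    calc Cp' = (Z'⁻¹ * Z') * Cp' * (Z'ᴴ * (Z'ᴴ)⁻¹) := by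
          rw [Matrix.nonsing_inv_mul _ hZd', Matrix.mul_nonsing_inv _ hZHd',
            Matrix.one_mul, Matrix.mul_one]
      _ = Z'⁻¹ * (Z' * Cp' * Z'ᴴ) * (Z'ᴴ)⁻¹ := by simp only [Matrix.mul_assoc]
      _ = Z'⁻¹ * lamMin σ * (Z'ᴴ)⁻¹ := by rw [hZC']
  have hQinv : Q⁻¹ = Qᴴ := Matrix.inv_eq_right_inv hQ1
  have hZ'inv : Z'⁻¹ = Z⁻¹ * Qᴴ := by
    rw [← hQZ, Matrix.mul_inv_rev, hQinv]
  have hZ'Hinv : (Z'ᴴ)⁻¹ = Q * (Zᴴ)⁻¹ := by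
    rw [show Z'ᴴ = Zᴴ * Qᴴ from by rw [← hQZ, Matrix.conjTranspose_mul],
      Matrix.mul_inv_rev, Matrix.inv_eq_right_inv hQ2]
  rw [hCpeq, hCpeq', hZ'inv, hZ'Hinv]
  calc Z⁻¹ * lamMin σ * (Zᴴ)⁻¹
      = Z⁻¹ * (Qᴴ * lamMin σ * Q) * (Zᴴ)⁻¹ := by rw [hΛfix]
    _ = Z⁻¹ * Qᴴ * lamMin σ * (Q * (Zᴴ)⁻¹) := by simp only [Matrix.mul_assoc]

end AuxUnique


/-- Uniqueness and explicit formula for the lift `C₊ ∈ Ω₊(C)`. -/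
theorem unique_lift
    (C : Mat r) (hC : C.PosDef)
    (D : Matrix (Fin r ⊕ Fin q) (Fin r ⊕ Fin q) ℂ) (hD : D.PosDef)
    (hD11 : (Matrix.toBlocks₁₁ D).PosDef)
    (hS : (Matrix.toBlocks₂₂ D - (Matrix.toBlocks₁₂ D)ᴴ * (Matrix.toBlocks₁₁ D)⁻¹ *
      Matrix.toBlocks₁₂ D).PosDef) :
    (∃! Cp : Matrix (Fin r ⊕ Fin q) (Fin r ⊕ Fin q) ℂ,
      IsLift C D (relEigsDesc hD11 hC.isHermitian) Cp) ∧
    ∀ P ∈ Matrix.unitaryGroup (Fin r) ℂ,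
      Pᴴ * (Matrix.diagonal fun k => ((relEigsDesc hD11 hC.isHermitian k : ℝ) : ℂ)) * P =
        hD11.posSemidef.sqrt⁻¹ * C * hD11.posSemidef.sqrt⁻¹ →
      IsLift C D (relEigsDesc hD11 hC.isHermitian)
        ((Matrix.fromBlocks (P * hD11.posSemidef.sqrt)
            (P * hD11.posSemidef.sqrt⁻¹ * Matrix.toBlocks₁₂ D) 0 hS.posSemidef.sqrt)ᴴ *
          lamMin (relEigsDesc hD11 hC.isHermitian) *
          Matrix.fromBlocks (P * hD11.posSemidef.sqrt)
            (P * hD11.posSemidef.sqrt⁻¹ * Matrix.toBlocks₁₂ D) 0 hS.posSemidef.sqrt) := by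
  obtain ⟨P0, hP0u, hP0⟩ := my_exists_P hC hD11
  constructor
  · refine ⟨_, my_main C hC D hD hD11 hS P0 hP0u hP0, ?_⟩
    intro y hy
    exact my_lift_unique (fun k => my_relEigsDesc_pos hC hD11 k) hy
      (my_main C hC D hD hD11 hS P0 hP0u hP0)
  · intro P hPu hP
    exact my_main C hC D hD hD11 hS P hPu hP

end
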